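/- (Rényi weak triangle inequality / decomposition) For any q > 1 and any three probability measures ρ, ν, μ on ℝⁿ (mutually absolutely continuous with densities), R_{q,ν}(ρ) ≤ ((q - 1/2)/(q - 1)) · R_{2q,μ}(ρ) + R_{2q-1,ν}(μ). -/

import Mathlib

open MeasureTheory

/-- Rényi divergence of order `q` of density `ρ` with respect to density `ν`:
`R_{q,ν}(ρ) = (1/(q-1)) log ∫ ρ^q / ν^{q-1}`. -/
noncomputable def renyiDiv {n : ℕ} (q : ℝ)
    (ρ ν : EuclideanSpace ℝ (Fin n) → ℝ) : ℝ :=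
  (q - 1)⁻¹ * Real.log (∫ x, ρ x ^ q / ν x ^ (q - 1))

private lemma integral_pos_aux {n : ℕ} {f : EuclideanSpace ℝ (Fin n) → ℝ}
    (hf : ∀ x, 0 < f x) (hfi : Integrable f) : 0 < ∫ x, f x := by
  rw [integral_pos_iff_support_of_nonneg (fun x => (hf x).le) hfi]
  have : Function.support f = Set.univ := by
    ext x; simp [(hf x).ne']
  rw [this]
  exact isOpen_univ.measure_pos volume Set.univ_nonempty

/-- Weak triangle inequality / decomposition for Rényi divergence:
`R_{q,ν}(ρ) ≤ ((q - 1/2)/(q - 1)) R_{2q,μ}(ρ) + R_{2q-1,ν}(μ)`. -/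
theorem renyi_weak_triangle (n : ℕ) (q : ℝ) (hq : 1 < q)
    (ρ ν μ : EuclideanSpace ℝ (Fin n) → ℝ)
    (hρpos : ∀ x, 0 < ρ x) (hνpos : ∀ x, 0 < ν x) (hμpos : ∀ x, 0 < μ x)
    (hρ1 : ∫ x, ρ x = 1) (hν1 : ∫ x, ν x = 1) (hμ1 : ∫ x, μ x = 1)
    (hint1 : Integrable fun x => ρ x ^ q / ν x ^ (q - 1))
    (hint2 : Integrable fun x => ρ x ^ (2 * q) / μ x ^ (2 * q - 1))
    (hint3 : Integrable fun x => μ x ^ (2 * q - 1) / ν x ^ (2 * q - 2)) :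
    renyiDiv q ρ ν
      ≤ ((q - 1/2) / (q - 1)) * renyiDiv (2 * q) ρ μ
        + renyiDiv (2 * q - 1) μ ν := by
  have hq1 : (0:ℝ) < q - 1 := by linarith
  -- positivity of the three integrals
  set I : ℝ := ∫ x, ρ x ^ q / ν x ^ (q - 1) with hI
  set A : ℝ := ∫ x, ρ x ^ (2 * q) / μ x ^ (2 * q - 1) with hA
  set B : ℝ := ∫ x, μ x ^ (2 * q - 1) / ν x ^ (2 * q - 2) with hB
  have hIpos : 0 < I := integral_pos_aux
    (fun x => div_pos (Real.rpow_pos_of_pos (hρpos x) _)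
      (Real.rpow_pos_of_pos (hνpos x) _)) hint1
  have hApos : 0 < A := integral_pos_aux
    (fun x => div_pos (Real.rpow_pos_of_pos (hρpos x) _)
      (Real.rpow_pos_of_pos (hμpos x) _)) hint2
  have hBpos : 0 < B := integral_pos_aux
    (fun x => div_pos (Real.rpow_pos_of_pos (hμpos x) _)
      (Real.rpow_pos_of_pos (hνpos x) _)) hint3
  -- Cauchy–Schwarz
  set F : EuclideanSpace ℝ (Fin n) → ℝ :=
    fun x => Real.sqrt (ρ x ^ (2 * q) / μ x ^ (2 * q - 1)) with hF
  set G : EuclideanSpace ℝ (Fin n) → ℝ :=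
    fun x => Real.sqrt (μ x ^ (2 * q - 1) / ν x ^ (2 * q - 2)) with hG
  have hFsq : ∀ x, F x ^ (2:ℕ) = ρ x ^ (2 * q) / μ x ^ (2 * q - 1) := fun x =>
    Real.sq_sqrt (div_nonneg (Real.rpow_pos_of_pos (hρpos x) _).le
      (Real.rpow_pos_of_pos (hμpos x) _).le)
  have hGsq : ∀ x, G x ^ (2:ℕ) = μ x ^ (2 * q - 1) / ν x ^ (2 * q - 2) := fun x =>
    Real.sq_sqrt (div_nonneg (Real.rpow_pos_of_pos (hμpos x) _).le
      (Real.rpow_pos_of_pos (hνpos x) _).le)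
  have hFG : ∀ x, F x * G x = ρ x ^ q / ν x ^ (q - 1) := by
    intro x
    have key : ρ x ^ (2 * q) / μ x ^ (2 * q - 1) * (μ x ^ (2 * q - 1) / ν x ^ (2 * q - 2))
        = (ρ x ^ q / ν x ^ (q - 1)) ^ 2 := by
      have h1 : ρ x ^ (2 * q) = ρ x ^ q * ρ x ^ q := by
        rw [two_mul, Real.rpow_add (hρpos x)]
      have h2 : ν x ^ (2 * q - 2) = ν x ^ (q - 1) * ν x ^ (q - 1) := by
        rw [show 2 * q - 2 = (q - 1) + (q - 1) by ring, Real.rpow_add (hνpos x)]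
      have hc : μ x ^ (2 * q - 1) ≠ 0 := (Real.rpow_pos_of_pos (hμpos x) _).ne'
      have hb : ν x ^ (q - 1) ≠ 0 := (Real.rpow_pos_of_pos (hνpos x) _).ne'
      rw [h1, h2]
      field_simp
    rw [hF, hG, ← Real.sqrt_mul (div_nonneg (Real.rpow_pos_of_pos (hρpos x) _).le
      (Real.rpow_pos_of_pos (hμpos x) _).le), key,
      Real.sqrt_sq (div_nonneg (Real.rpow_pos_of_pos (hρpos x) _).le
      (Real.rpow_pos_of_pos (hνpos x) _).le)]
  have hFmeas : AEStronglyMeasurable F volume :=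
    Real.continuous_sqrt.comp_aestronglyMeasurable hint2.aestronglyMeasurable
  have hGmeas : AEStronglyMeasurable G volume :=
    Real.continuous_sqrt.comp_aestronglyMeasurable hint3.aestronglyMeasurable
  have hFmem : MemLp F (ENNReal.ofReal 2) volume := by
    rw [show ENNReal.ofReal 2 = 2 by norm_num]
    rw [memLp_two_iff_integrable_sq hFmeas]
    exact hint2.congr (by
      filter_upwards with x using (hFsq x).symm)
  have hGmem : MemLp G (ENNReal.ofReal 2) volume := by
    rw [show ENNReal.ofReal 2 = 2 by norm_num]
    rw [memLp_two_iff_integrable_sq hGmeas]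
    exact hint3.congr (by
      filter_upwards with x using (hGsq x).symm)
  have hCS := integral_mul_le_Lp_mul_Lq_of_nonneg
    (Real.HolderConjugate.two_two : Real.HolderConjugate 2 2) (Filter.Eventually.of_forall fun x => Real.sqrt_nonneg _)
    (Filter.Eventually.of_forall fun x => Real.sqrt_nonneg _) hFmem hGmem
  have hFsq' : ∀ x, F x ^ (2:ℝ) = ρ x ^ (2 * q) / μ x ^ (2 * q - 1) := fun x => by
    rw [show (2:ℝ) = ((2:ℕ):ℝ) by norm_num, Real.rpow_natCast]; exact hFsq x
  have hGsq' : ∀ x, G x ^ (2:ℝ) = μ x ^ (2 * q - 1) / ν x ^ (2 * q - 2) := fun x => by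
    rw [show (2:ℝ) = ((2:ℕ):ℝ) by norm_num, Real.rpow_natCast]; exact hGsq x
  have hCS' : I ≤ A ^ ((1:ℝ)/2) * B ^ ((1:ℝ)/2) := by
    calc I = ∫ x, F x * G x := by
            rw [hI]; exact (integral_congr_ae (Filter.Eventually.of_forall
              fun x => hFG x)).symm
      _ ≤ (∫ x, F x ^ (2:ℝ)) ^ ((1:ℝ)/2) * (∫ x, G x ^ (2:ℝ)) ^ ((1:ℝ)/2) := hCS
      _ = A ^ ((1:ℝ)/2) * B ^ ((1:ℝ)/2) := by
            rw [hA, hB]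
            congr 1 <;> congr 1 <;> exact integral_congr_ae
              (Filter.Eventually.of_forall fun x => by simp [hFsq' x, hGsq' x])
  -- take logs
  have hlog : Real.log I ≤ (1/2) * Real.log A + (1/2) * Real.log B := by
    calc Real.log I ≤ Real.log (A ^ ((1:ℝ)/2) * B ^ ((1:ℝ)/2)) :=
          Real.log_le_log hIpos hCS'
      _ = (1/2) * Real.log A + (1/2) * Real.log B := by
          rw [Real.log_mul (Real.rpow_pos_of_pos hApos _).ne'
            (Real.rpow_pos_of_pos hBpos _).ne', Real.log_rpow hApos, Real.log_rpow hBpos]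
  -- conclude
  have h2q1 : (2:ℝ) * q - 1 ≠ 0 := by intro h; nlinarith
  have h2q2 : (2:ℝ) * q - 2 ≠ 0 := by intro h; nlinarith
  have hq1' : q - 1 ≠ 0 := hq1.ne'
  have hBeq : (∫ x, μ x ^ (2 * q - 1) / ν x ^ (2 * q - 1 - 1)) = B := by
    rw [hB]; simp only [show 2 * q - 1 - 1 = 2 * q - 2 by ring]
  rw [renyiDiv, renyiDiv, renyiDiv, ← hI, ← hA, hBeq]
  have hmul : (q - 1)⁻¹ * Real.log I
      ≤ (q - 1)⁻¹ * ((1/2) * Real.log A + (1/2) * Real.log B) := by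
    exact mul_le_mul_of_nonneg_left hlog (by positivity)
  refine hmul.trans_eq ?_
  have e1 : (q - 1/2) / (q - 1) * (2 * q - 1)⁻¹ = (q - 1)⁻¹ * (1/2) := by
    rw [show q - 1/2 = (2*q-1)/2 by ring]
    field_simp
  have e2 : (2 * q - 2)⁻¹ = (q - 1)⁻¹ * (1/2) := by
    rw [show 2 * q - 2 = (q - 1) * 2 by ring, mul_inv]
    norm_num
  rw [show 2 * q - 1 - 1 = 2 * q - 2 by ring, e2, ← mul_assoc, e1]
  ring
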